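/- Over GF(2), if n is even then every root (in an algebraic closure of GF(2)) of the polynomial p_n defined by p_0=1, p_1=λ, p_i=λp_{i−1}+p_{i−2} has multiplicity exactly 2, and 0 is not a root of p_n. -/
import Mathlib

noncomputable def chebLike : ℕ → Polynomial (ZMod 2)
  | 0 => 1
  | 1 => Polynomial.X
  | (n + 2) => Polynomial.X * chebLike (n + 1) + chebLike n

open Polynomial

private lemma h2P : (2 : Polynomial (ZMod 2)) = 0 := by
  exact_mod_cast CharP.cast_eq_zero (Polynomial (ZMod 2)) 2

private lemma chebLike_add_formula (b : ℕ) : ∀ a : ℕ,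
    chebLike (a + b + 2) =
      chebLike (a + 1) * chebLike (b + 1) + chebLike a * chebLike b := by
  intro a
  induction a using Nat.twoStepInduction with
  | zero => simp [chebLike]
  | one =>
      have h3 : 1 + b + 2 = (b + 1) + 2 := by omega
      rw [h3]
      simp [chebLike]; ring
  | more a ih1 ih2 =>
      have h3 : a + 2 + b + 2 = (a + b + 2) + 2 := by omega
      have h4 : a + 1 + b + 2 = (a + b + 2) + 1 := by omega
      rw [h3, show chebLike ((a+b+2)+2) = Polynomial.X * chebLike ((a+b+2)+1) + chebLike (a+b+2) from rfl,
        ← h4, ih1, ih2,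
        show chebLike (a+2+1) = Polynomial.X * chebLike (a+2) + chebLike (a+1) from rfl,
        show chebLike (a+2) = Polynomial.X * chebLike (a+1) + chebLike a from rfl]
      ring

private lemma chebLike_sq (k : ℕ) :
    (chebLike (k + 1) + chebLike k) ^ 2 =
      1 + Polynomial.X * (chebLike (k + 1) * chebLike k) := by
  induction k with
  | zero =>
      simp [chebLike]
      linear_combination Polynomial.X * h2P
  | succ k ih =>
      rw [show chebLike (k+2) = Polynomial.X * chebLike (k+1) + chebLike k from rfl]
      linear_combination ih + (Polynomial.X * chebLike (k+1) *
        (chebLike k + chebLike (k+1))) * h2P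

private lemma chebLike_even (k : ℕ) :
    chebLike (k + k + 2) = (chebLike (k + 1) + chebLike k) ^ 2 := by
  have h := chebLike_add_formula k k
  linear_combination h - chebLike (k+1) * chebLike k * h2P

theorem stmt_5 (n : ℕ) (hn : 0 < n) (hne : Even n) :
    (∀ x : AlgebraicClosure (ZMod 2),
      ((chebLike n).map (algebraMap (ZMod 2) (AlgebraicClosure (ZMod 2)))).IsRoot x →
      ((chebLike n).map (algebraMap (ZMod 2) (AlgebraicClosure (ZMod 2)))).rootMultiplicity x = 2) ∧
    ¬ ((chebLike n).map (algebraMap (ZMod 2) (AlgebraicClosure (ZMod 2)))).IsRoot 0 := by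
  obtain ⟨m, hm⟩ := hne
  obtain ⟨k, rfl⟩ : ∃ k, n = k + k + 2 := ⟨m - 1, by omega⟩
  set K := AlgebraicClosure (ZMod 2)
  set φ := algebraMap (ZMod 2) K
  have h2K : (2 : K) = 0 := by exact_mod_cast CharP.cast_eq_zero K 2
  set A : K[X] := (chebLike (k + 1)).map φ with hA
  set B : K[X] := (chebLike k).map φ with hB
  set Q : K[X] := A + B with hQdef
  -- the mapped polynomial is Q ^ 2
  have hPQ : (chebLike (k + k + 2)).map φ = Q ^ 2 := by
    rw [chebLike_even k, Polynomial.map_pow, Polynomial.map_add]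
  -- key identity in K[X]
  have hQsq : Q ^ 2 = 1 + Polynomial.X * (A * B) := by
    have := congrArg (Polynomial.map φ) (chebLike_sq k)
    simpa [Polynomial.map_pow, Polynomial.map_add, Polynomial.map_mul,
      Polynomial.map_one, Polynomial.map_X] using this
  -- derivative identity
  have hC2 : (Polynomial.C (2 : K)) = 0 := by
    rw [show (2 : K) = 0 from h2K, map_zero]
  have hD : (0 : K[X]) = A * B +
      Polynomial.X * (derivative A * B + A * derivative B) := by
    have := congrArg derivative hQsq
    rw [derivative_sq, hC2, zero_mul, zero_mul] at this
    rw [this]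
    simp [derivative_mul]
  have hQ0 : Polynomial.eval 0 (Q ^ 2) = 1 := by
    rw [hQsq]; simp
  have hQne : Q ≠ 0 := by
    intro h
    rw [h] at hQ0; simp at hQ0
  constructor
  · intro x hx
    rw [hPQ] at hx ⊢
    have hxQ : Polynomial.eval x Q = 0 := by
      have := hx
      simp only [Polynomial.IsRoot, Polynomial.eval_pow] at this
      exact pow_eq_zero_iff (n := 2) (by norm_num) |>.mp this
    -- derivative of Q is nonzero at x
    have hQ'x : Polynomial.eval x (derivative Q) ≠ 0 := by
      intro h4
      set a := Polynomial.eval x A with ha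
      set b := Polynomial.eval x B with hb
      set a' := Polynomial.eval x (derivative A) with ha'
      set b' := Polynomial.eval x (derivative B) with hb'
      have h1 : a + b = 0 := by
        have := hxQ; rw [hQdef] at this; simpa using this
      have h2 : (1 : K) + x * (a * b) = 0 := by
        have := congrArg (Polynomial.eval x) hQsq
        simp only [Polynomial.eval_add, Polynomial.eval_one, Polynomial.eval_mul,
          Polynomial.eval_X, Polynomial.eval_pow] at this
        rw [hxQ] at this
        simpa using this.symm
      have h3 : a * b + x * (a' * b + a * b') = 0 := by
        have := congrArg (Polynomial.eval x) hD
        simpa using this.symm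
      have h4' : a' + b' = 0 := by
        have : derivative Q = derivative A + derivative B := by
          rw [hQdef, derivative_add]
        rw [this] at h4; simpa using h4
      have hba : b = a := by linear_combination h1 - a * h2K
      rw [hba] at h3 h2
      have haa : a * a = 0 := by linear_combination h3 - x * a * h4'
      have ha0 : a = 0 := mul_self_eq_zero.mp haa
      rw [ha0] at h2
      simp at h2
    have hQ'ne : derivative Q ≠ 0 := by
      intro h; rw [h] at hQ'x; simp at hQ'x
    have hmult1 : Q.rootMultiplicity x = 1 := by
      have hpos : 0 < Q.rootMultiplicity x := (Polynomial.rootMultiplicity_pos hQne).mpr hxQ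
      by_contra hne1
      have h2le : 2 ≤ Q.rootMultiplicity x := by omega
      have := Polynomial.rootMultiplicity_sub_one_le_derivative_rootMultiplicity_of_ne_zero Q x hQ'ne
      have hdpos : 0 < (derivative Q).rootMultiplicity x := by omega
      have := (Polynomial.rootMultiplicity_pos hQ'ne).mp hdpos
      exact hQ'x this
    rw [sq, Polynomial.rootMultiplicity_mul (mul_ne_zero hQne hQne), hmult1]
  · intro h
    rw [hPQ] at h
    rw [Polynomial.IsRoot, hQ0] at h
    exact one_ne_zero h
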